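/- Let n ≥ 2, let ξ ∈ ℝⁿ be regarded as the real 1-form Σ_j ξ_j dx^j, and let a^l ∈ Λ^l for l = 0,…,n. Then |Σ_{l=0}^n ((−1)^l ξ∧a^l + ξ∨a^l)|² = |ξ|² Σ_{l=0}^n |a^l|², where the norm on the left is the graded norm |u|² = ⟨u, ū⟩. In particular, for each l the cross terms vanish: ⟨ξ∧a^{l−1}, conj(ξ∨a^{l+1})⟩ = 0. -/

import Mathlib

/-!
The vee product `ξ ∨ ·` is adjoint to `ξ ∧ ·` up to the grading sign:
`⟨ξ ∧ u, v⟩ = ⟨(-1)^{deg} u, ξ ∨ v⟩`. Two sign computations then do all the work: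
`ξ ∨ ξ ∨ u = 0`, because the double sum over pairs `j ≠ k` is antisymmetric, and the
anticommutation relation `ξ ∨ (ξ ∧ v) - ξ ∧ (ξ ∨ v) = |ξ|² (-1)^{deg} v`, in which the terms with
`j ≠ k` cancel and those with `j = k` contribute `ξ_j²` for each `j`. The first makes every
pairing of a wedge with a vee vanish, the second gives `|ξ ∧ u|² + |ξ ∨ u|² = |ξ|² |u|²`.
Since `Σ_l ((-1)^l ξ ∧ a^l + ξ ∨ a^l)` is `ξ ∧ ((-1)^{deg} A) + ξ ∨ A` with `A = Σ_l a^l`, and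
forms of different degrees are orthogonal, the identity follows.
-/

noncomputable section

open MeasureTheory Finset

namespace EMPaper

/-- Points of `ℝⁿ`. -/
abbrev Pt (n : ℕ) := Fin n → ℝ

/-- A graded element of the complexified exterior algebra `Λ ℝⁿ ⊗ ℂ`, encoded by its
coefficients on the basis monomials `dx^{α₁} ∧ ⋯ ∧ dx^{α_l}`, indexed by the set
`{α₁ < ⋯ < α_l} ⊆ Fin n`. -/
abbrev GF (n : ℕ) := Finset (Fin n) → ℂ

/-- A graded differential form on `ℝⁿ`. -/
abbrev Form (n : ℕ) := Pt n → GF n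

variable {n : ℕ}

/-- The sign `(-1)^{#{(i,j) ∈ I × J : j < i}}` obtained when merging the increasing
enumerations of the disjoint sets `I` and `J`. -/
def msgn (I J : Finset (Fin n)) : ℂ :=
  (-1 : ℂ) ^ (((I ×ˢ J).filter fun p => p.2 < p.1).card)

/-- The wedge (exterior) product. -/
def wedge (u v : GF n) : GF n := fun S =>
  ∑ I ∈ S.powerset, msgn I (S \ I) * u I * v (S \ I)

/-- The vee product, determined by `⟨w, v ∨ u⟩ = ⟨w ∧ v, u⟩`. -/
def vee (v u : GF n) : GF n := fun I =>
  ∑ J ∈ (univ \ I).powerset, msgn I J * v J * u (I ∪ J)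

/-- The ℂ-bilinear (non-Hermitian) inner product for which the basis monomials are
orthonormal. -/
def ginner (u v : GF n) : ℂ := ∑ S : Finset (Fin n), u S * v S

/-- Componentwise complex conjugation. -/
def gconj (u : GF n) : GF n := fun S => (starRingEnd ℂ) (u S)

/-- Projection onto the degree-`l` part. -/
def proj (l : ℕ) (u : GF n) : GF n := fun S => if S.card = l then u S else 0

/-- `u` is homogeneous of degree `l` (an element of `Λ^l`). -/
def IsGrade (l : ℕ) (u : GF n) : Prop := ∀ S : Finset (Fin n), S.card ≠ l → u S = 0

/-- The basis one-form `dx^j`. -/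
def dxe (j : Fin n) : GF n := fun S => if S = {j} then 1 else 0

/-- The one-form with components `c j`. -/
def oneG (c : Fin n → ℂ) : GF n := fun S => ∑ j, if S = {j} then c j else 0

/-- `Σ_l (-1)^l u^l`. -/
def altSign (u : GF n) : GF n := fun S => (-1 : ℂ) ^ S.card * u S

/-- Exterior derivative `du = Σ_j dx^j ∧ ∂_j u`, expressed in terms of the family of
partial derivatives `D j = ∂_j u` at a point. -/
def gd (D : Fin n → GF n) : GF n := fun S => ∑ j, wedge (dxe j) (D j) S

/-- Coderivative `δu = (-1)^l Σ_j dx^j ∨ ∂_j u` (degreewise on graded forms), expressed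
in terms of the family of partial derivatives `D j = ∂_j u` at a point. -/
def gdel (D : Fin n → GF n) : GF n := fun S =>
  (-1 : ℂ) ^ (S.card + 1) * ∑ j, vee (dxe j) (D j) S

/-- Classical partial derivative `∂_{x^j}` of a complex-valued function. -/
def pd (j : Fin n) (f : Pt n → ℂ) : Pt n → ℂ := fun x => fderiv ℝ f x (Pi.single j 1)

/-- Componentwise classical partial derivatives of a graded form. -/
def Dcl (φ : Form n) : Fin n → Form n := fun j x S => pd j (fun y => φ y S) x

/-- A test function: smooth and compactly supported. -/
def IsTest (φ : Pt n → ℂ) : Prop := ContDiff ℝ (⊤ : ℕ∞) φ ∧ HasCompactSupport φ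

/-- A graded form all of whose components are test functions. -/
def TestForm (φ : Form n) : Prop := ∀ S : Finset (Fin n), IsTest fun x => φ x S

/-- `f ∈ L²_loc(ℝⁿ)`. -/
def L2loc (f : Pt n → ℂ) : Prop :=
  AEStronglyMeasurable f (volume : Measure (Pt n)) ∧
    ∀ K : Set (Pt n), IsCompact K → IntegrableOn (fun x => ‖f x‖ ^ 2) K volume

/-- `g` is the weak `j`-th partial derivative of `f` on `ℝⁿ`. -/
def HasWeakPD (j : Fin n) (f g : Pt n → ℂ) : Prop :=
  ∀ φ : Pt n → ℂ, IsTest φ → ∫ x, g x * φ x = -∫ x, f x * pd j φ x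

/-- All components of the graded form `w` belong to `H¹_loc(ℝⁿ)`, with weak partial
derivatives given componentwise by the family `Dw`. -/
def H1locWith (w : Form n) (Dw : Fin n → Form n) : Prop :=
  (∀ S : Finset (Fin n), L2loc fun x => w x S) ∧
    (∀ (j : Fin n) (S : Finset (Fin n)),
      HasWeakPD j (fun x => w x S) fun x => Dw j x S) ∧
    ∀ (j : Fin n) (S : Finset (Fin n)), L2loc fun x => Dw j x S

/-- `dx^j ∧ dx^{S \ {j}} = signBelow S j • dx^S` for `j ∈ S`, and
`dx^I ∧ dx^j = signAbove I j • dx^{I ∪ {j}}` for `j ∉ I`. -/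
def signBelow (S : Finset (Fin n)) (j : Fin n) : ℂ := (-1) ^ #(S.filter (· < j))

def signAbove (S : Finset (Fin n)) (j : Fin n) : ℂ := (-1) ^ #(S.filter (j < ·))

lemma neg_one_pow_mul_self (k : ℕ) : (-1 : ℂ) ^ k * (-1) ^ k = 1 := by
  rw [← mul_pow]; norm_num

lemma signBelow_mul_self (S : Finset (Fin n)) (j : Fin n) : signBelow S j * signBelow S j = 1 :=
  neg_one_pow_mul_self _

lemma signAbove_mul_self (S : Finset (Fin n)) (j : Fin n) : signAbove S j * signAbove S j = 1 :=
  neg_one_pow_mul_self _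

lemma msgn_singleton_left (j : Fin n) (J : Finset (Fin n)) :
    msgn {j} J = (-1) ^ #(J.filter (· < j)) := by
  rw [msgn, singleton_product, filter_map, card_map]; rfl

lemma msgn_singleton_right (I : Finset (Fin n)) (j : Fin n) : msgn I {j} = signAbove I j := by
  rw [msgn, product_singleton, filter_map, card_map]; rfl

lemma wedge_oneG_apply (c : Fin n → ℂ) (u : GF n) (S : Finset (Fin n)) :
    wedge (oneG c) u S = ∑ j ∈ S, signBelow S j * c j * u (S.erase j) := by
  simp only [wedge, oneG, mul_sum, sum_mul, mul_ite, ite_mul, mul_zero, zero_mul]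
  rw [sum_comm]
  simp only [sum_ite_eq', mem_powerset, singleton_subset_iff, sum_ite_mem, univ_inter,
    sdiff_singleton_eq_erase, msgn_singleton_left, filter_erase]
  refine sum_congr rfl fun j _ => ?_
  rw [erase_eq_of_notMem (by simp), signBelow]

lemma vee_oneG_apply (c : Fin n → ℂ) (u : GF n) (I : Finset (Fin n)) :
    vee (oneG c) u I = ∑ j ∈ Iᶜ, signAbove I j * c j * u (insert j I) := by
  simp only [vee, oneG, mul_sum, sum_mul, mul_ite, ite_mul, mul_zero, zero_mul]
  rw [sum_comm]
  simp only [sum_ite_eq', mem_powerset, singleton_subset_iff, sum_ite_mem, univ_inter,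
    ← compl_eq_univ_sdiff, union_singleton, msgn_singleton_right]

lemma signBelow_insert_self {j : Fin n} {I : Finset (Fin n)} (h : j ∉ I) :
    signBelow (insert j I) j = (-1) ^ #I * signAbove I j := by
  have hsplit : #(I.filter (· < j)) + #(I.filter (j < ·)) = #I := by
    rw [← card_filter_add_card_filter_not (s := I) (· < j)]
    congr 2
    refine filter_congr fun i hi => ?_
    have hij := ne_of_mem_of_not_mem hi h
    rw [not_lt]
    exact ⟨le_of_lt, fun hle => lt_of_le_of_ne hle hij.symm⟩
  rw [signBelow, filter_insert, if_neg (lt_irrefl j), signAbove, ← hsplit, pow_add, mul_assoc,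
    neg_one_pow_mul_self, mul_one]

lemma signAbove_erase_self {j : Fin n} {S : Finset (Fin n)} (h : j ∈ S) :
    signAbove (S.erase j) j = -((-1) ^ #S * signBelow S j) := by
  have h1 := signBelow_insert_self (notMem_erase j S)
  rw [insert_erase h] at h1
  rw [h1, ← card_erase_add_one h, pow_succ]
  linear_combination (-signAbove (S.erase j) j) * neg_one_pow_mul_self (S.erase j).card

lemma signBelow_insert {j : Fin n} {S : Finset (Fin n)} (h : j ∉ S) (k : Fin n) :
    signBelow (insert j S) k = (if j < k then -1 else 1) * signBelow S k := by
  rw [signBelow, signBelow, filter_insert]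
  split_ifs
  · rw [card_insert_of_notMem fun hm => h (mem_filter.mp hm).1, pow_succ, mul_comm]
  · rw [one_mul]

lemma signAbove_insert {j : Fin n} {I : Finset (Fin n)} (h : j ∉ I) (k : Fin n) :
    signAbove (insert j I) k = (if k < j then -1 else 1) * signAbove I k := by
  rw [signAbove, signAbove, filter_insert]
  split_ifs
  · rw [card_insert_of_notMem fun hm => h (mem_filter.mp hm).1, pow_succ, mul_comm]
  · rw [one_mul]

lemma signAbove_mul_signBelow_insert {j k : Fin n} {S : Finset (Fin n)} (hj : j ∉ S)
    (hk : k ∈ S) :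
    signAbove S j * signBelow (insert j S) k = signBelow S k * signAbove (S.erase k) j := by
  have h := signAbove_insert (notMem_erase k S) j
  rw [insert_erase hk] at h
  rw [signBelow_insert hj, h]
  split_ifs <;> ring

lemma sum_sum_erase_eq_sum_sum_compl {α M : Type*} [Fintype α] [DecidableEq α]
    [AddCommMonoid M] (g : Finset α → α → M) :
    ∑ S : Finset α, ∑ j ∈ S, g (S.erase j) j = ∑ I : Finset α, ∑ j ∈ Iᶜ, g I j := by
  rw [sum_sigma', sum_sigma']
  refine sum_nbij' (fun p => ⟨p.1.erase p.2, p.2⟩) (fun p => ⟨insert p.2 p.1, p.2⟩)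
    ?_ ?_ ?_ ?_ fun _ _ => rfl
  · simp
  · simp
  · rintro ⟨S, j⟩ h
    simp_all [insert_erase]
  · rintro ⟨I, j⟩ h
    simp_all

lemma ginner_wedge_oneG (c : Fin n → ℂ) (u v : GF n) :
    ginner (wedge (oneG c) u) v = ginner (altSign u) (vee (oneG c) v) := by
  calc ginner (wedge (oneG c) u) v
      = ∑ S : Finset (Fin n), ∑ j ∈ S, (fun I t =>
          signBelow (insert t I) t * c t * u I * v (insert t I)) (S.erase j) j := by
        refine sum_congr rfl fun S _ => ?_
        rw [wedge_oneG_apply, sum_mul]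
        exact sum_congr rfl fun j hj => by simp only [insert_erase hj]
    _ = ∑ I : Finset (Fin n), ∑ j ∈ Iᶜ,
          signBelow (insert j I) j * c j * u I * v (insert j I) :=
        sum_sum_erase_eq_sum_sum_compl fun I t =>
          signBelow (insert t I) t * c t * u I * v (insert t I)
    _ = ginner (altSign u) (vee (oneG c) v) := by
        refine sum_congr rfl fun I _ => ?_
        rw [vee_oneG_apply, altSign, mul_sum]
        refine sum_congr rfl fun j hj => ?_
        rw [signBelow_insert_self (mem_compl.mp hj)]
        ring

lemma ginner_eq_dotProduct (u v : GF n) : ginner u v = u ⬝ᵥ v := rfl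

lemma ginner_comm (u v : GF n) : ginner u v = ginner v u := dotProduct_comm u v

lemma altSign_altSign (u : GF n) : altSign (altSign u) = u := by
  funext S
  simp only [altSign, ← mul_assoc, neg_one_pow_mul_self, one_mul]

lemma ginner_altSign_left (u v : GF n) : ginner (altSign u) v = ginner u (altSign v) :=
  sum_congr rfl fun S _ => by simp only [altSign]; ring

lemma ginner_altSign_altSign (u v : GF n) : ginner (altSign u) (altSign v) = ginner u v := by
  rw [ginner_altSign_left, altSign_altSign]

lemma wedge_oneG_altSign (c : Fin n → ℂ) (u : GF n) :
    wedge (oneG c) (altSign u) = -altSign (wedge (oneG c) u) := by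
  funext S
  simp only [wedge_oneG_apply, altSign, Pi.neg_apply, mul_sum, ← sum_neg_distrib]
  refine sum_congr rfl fun j hj => ?_
  rw [← card_erase_add_one hj, pow_succ]
  ring

lemma ginner_vee_oneG (c : Fin n → ℂ) (u v : GF n) :
    ginner (vee (oneG c) u) v = -ginner (altSign u) (wedge (oneG c) v) := by
  calc ginner (vee (oneG c) u) v = ginner (wedge (oneG c) (altSign v)) u := by
        rw [ginner_wedge_oneG, altSign_altSign, ginner_comm]
    _ = -ginner (altSign u) (wedge (oneG c) v) := by
        rw [wedge_oneG_altSign, ginner_eq_dotProduct, neg_dotProduct, ← ginner_eq_dotProduct,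
          ginner_altSign_left, ginner_comm]

lemma sum_sum_erase_eq_zero_of_antisymm {α M : Type*} [DecidableEq α] [AddCommGroup M]
    [IsAddTorsionFree M] (s : Finset α) (F : α → α → M)
    (hF : ∀ j ∈ s, ∀ k ∈ s, j ≠ k → F j k = -F k j) :
    ∑ j ∈ s, ∑ k ∈ s.erase j, F j k = 0 := by
  rw [← self_eq_neg]
  conv_lhs =>
    rw [sum_comm' (t' := s) (s' := s.erase) fun j k => by
      simp only [mem_erase]; tauto]
  rw [← sum_neg_distrib]
  refine sum_congr rfl fun k hk => ?_
  rw [← sum_neg_distrib]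
  exact sum_congr rfl fun j hj => hF j (mem_of_mem_erase hj) k hk (ne_of_mem_erase hj)

lemma vee_oneG_vee_oneG (c : Fin n → ℂ) (u : GF n) : vee (oneG c) (vee (oneG c) u) = 0 := by
  funext I
  simp only [vee_oneG_apply, compl_insert, mul_sum]
  refine sum_sum_erase_eq_zero_of_antisymm _ _ fun j hj k hk hjk => ?_
  rw [mem_compl] at hj hk
  rw [signAbove_insert hj, signAbove_insert hk, insert_comm]
  rcases lt_or_gt_of_ne hjk with h | h
  · rw [if_pos h, if_neg (asymm h)]; ring
  · rw [if_neg (asymm h), if_pos h]; ring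

lemma vee_wedge_oneG_apply (c : Fin n → ℂ) (v : GF n) (S : Finset (Fin n)) :
    vee (oneG c) (wedge (oneG c) v) S
      = (-1) ^ #S * (∑ j ∈ Sᶜ, c j ^ 2) * v S
        + ∑ j ∈ Sᶜ, ∑ k ∈ S,
            signAbove S j * signBelow (insert j S) k * c j * c k * v (insert j (S.erase k)) := by
  rw [mul_sum, sum_mul, ← sum_add_distrib, vee_oneG_apply]
  refine sum_congr rfl fun j hj => ?_
  have hjS : j ∉ S := mem_compl.mp hj
  rw [wedge_oneG_apply, sum_insert hjS, erase_insert hjS, mul_add, mul_sum,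
    signBelow_insert_self hjS]
  congr 1
  · linear_combination ((-1) ^ #S * c j ^ 2 * v S) * signAbove_mul_self S j
  · refine sum_congr rfl fun k hk => ?_
    rw [erase_insert_of_ne (ne_of_mem_of_not_mem hk hjS).symm]
    ring

lemma wedge_vee_oneG_apply (c : Fin n → ℂ) (v : GF n) (S : Finset (Fin n)) :
    wedge (oneG c) (vee (oneG c) v) S
      = -((-1) ^ #S * (∑ k ∈ S, c k ^ 2) * v S)
        + ∑ j ∈ Sᶜ, ∑ k ∈ S,
            signAbove S j * signBelow (insert j S) k * c j * c k * v (insert j (S.erase k)) := by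
  rw [sum_comm, mul_sum, sum_mul, ← sum_neg_distrib, ← sum_add_distrib, wedge_oneG_apply]
  refine sum_congr rfl fun k hk => ?_
  have hkS : k ∉ Sᶜ := fun h => mem_compl.mp h hk
  rw [vee_oneG_apply, compl_erase, sum_insert hkS, insert_erase hk, mul_add, mul_sum,
    signAbove_erase_self hk]
  congr 1
  · linear_combination (-((-1) ^ #S * c k ^ 2 * v S)) * signBelow_mul_self S k
  · refine sum_congr rfl fun j hj => ?_
    rw [signAbove_mul_signBelow_insert (mem_compl.mp hj) hk]
    ring

lemma vee_wedge_oneG_sub_wedge_vee_oneG (c : Fin n → ℂ) (v : GF n) :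
    vee (oneG c) (wedge (oneG c) v) - wedge (oneG c) (vee (oneG c) v)
      = (∑ j, c j ^ 2) • altSign v := by
  funext S
  rw [Pi.sub_apply, vee_wedge_oneG_apply, wedge_vee_oneG_apply, Pi.smul_apply, altSign,
    smul_eq_mul, ← sum_add_sum_compl S]
  ring

lemma ginner_wedge_oneG_add_ginner_vee_oneG (c : Fin n → ℂ) (u v : GF n) :
    ginner (wedge (oneG c) u) (wedge (oneG c) v) + ginner (vee (oneG c) u) (vee (oneG c) v)
      = (∑ j, c j ^ 2) * ginner u v := by
  rw [ginner_wedge_oneG, ginner_vee_oneG, ← sub_eq_add_neg, ginner_eq_dotProduct,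
    ginner_eq_dotProduct, ← dotProduct_sub, vee_wedge_oneG_sub_wedge_vee_oneG, dotProduct_smul,
    ← ginner_eq_dotProduct, ginner_altSign_altSign, smul_eq_mul]

lemma ginner_wedge_oneG_vee_oneG (c : Fin n → ℂ) (u v : GF n) :
    ginner (wedge (oneG c) u) (vee (oneG c) v) = 0 := by
  rw [ginner_wedge_oneG, vee_oneG_vee_oneG, ginner_eq_dotProduct, dotProduct_zero]

lemma ginner_add_left (u v w : GF n) : ginner (u + v) w = ginner u w + ginner v w :=
  add_dotProduct u v w

lemma ginner_add_right (u v w : GF n) : ginner u (v + w) = ginner u v + ginner u w :=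
  dotProduct_add u v w

lemma ginner_wedge_altSign_add_vee (c : Fin n → ℂ) (u v : GF n) :
    ginner (wedge (oneG c) (altSign u) + vee (oneG c) u)
        (wedge (oneG c) (altSign v) + vee (oneG c) v)
      = (∑ j, c j ^ 2) * ginner u v := by
  have hW : ginner (wedge (oneG c) (altSign u)) (wedge (oneG c) (altSign v))
      = ginner (wedge (oneG c) u) (wedge (oneG c) v) := by
    rw [wedge_oneG_altSign, wedge_oneG_altSign, ginner_eq_dotProduct, neg_dotProduct,
      dotProduct_neg, neg_neg, ← ginner_eq_dotProduct, ginner_altSign_altSign]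
  rw [ginner_add_left, ginner_add_right, ginner_add_right, hW, ginner_wedge_oneG_vee_oneG,
    ginner_comm (vee _ u), ginner_wedge_oneG_vee_oneG, ← ginner_wedge_oneG_add_ginner_vee_oneG]
  ring

lemma gconj_add (u v : GF n) : gconj (u + v) = gconj u + gconj v :=
  funext fun S => map_add _ (u S) (v S)

lemma gconj_sum {ι : Type*} (s : Finset ι) (f : ι → GF n) :
    gconj (∑ i ∈ s, f i) = ∑ i ∈ s, gconj (f i) := by
  funext S
  simp only [gconj, Finset.sum_apply, map_sum]

lemma gconj_wedge (u v : GF n) : gconj (wedge u v) = wedge (gconj u) (gconj v) := by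
  funext S
  simp [gconj, wedge, msgn]

lemma gconj_vee (u v : GF n) : gconj (vee u v) = vee (gconj u) (gconj v) := by
  funext S
  simp [gconj, vee, msgn]

lemma gconj_altSign (u : GF n) : gconj (altSign u) = altSign (gconj u) := by
  funext S
  simp [gconj, altSign]

lemma gconj_oneG (c : Fin n → ℂ) : gconj (oneG c) = oneG fun j => starRingEnd ℂ (c j) := by
  funext S
  simp [gconj, oneG, apply_ite]

lemma wedge_sum {ι : Type*} (u : GF n) (s : Finset ι) (f : ι → GF n) :
    wedge u (∑ i ∈ s, f i) = ∑ i ∈ s, wedge u (f i) := by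
  funext S
  simp only [wedge, Finset.sum_apply, mul_sum]
  exact sum_comm

lemma vee_sum {ι : Type*} (v : GF n) (s : Finset ι) (f : ι → GF n) :
    vee v (∑ i ∈ s, f i) = ∑ i ∈ s, vee v (f i) := by
  funext I
  simp only [vee, Finset.sum_apply, mul_sum]
  exact sum_comm

lemma wedge_smul (u : GF n) (r : ℂ) (v : GF n) : wedge u (r • v) = r • wedge u v := by
  funext S
  simp only [wedge, Pi.smul_apply, smul_eq_mul, mul_sum]
  exact sum_congr rfl fun I _ => by ring

lemma altSign_sum {ι : Type*} (s : Finset ι) (f : ι → GF n) :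
    altSign (∑ i ∈ s, f i) = ∑ i ∈ s, altSign (f i) := by
  funext S
  simp only [altSign, Finset.sum_apply, mul_sum]

lemma IsGrade.gconj {l : ℕ} {u : GF n} (h : IsGrade l u) : IsGrade l (gconj u) :=
  fun S hS => by rw [EMPaper.gconj, h S hS, map_zero]

lemma IsGrade.altSign_eq {l : ℕ} {u : GF n} (h : IsGrade l u) :
    altSign u = (-1 : ℂ) ^ l • u := by
  funext S
  by_cases hS : #S = l
  · simp [altSign, hS]
  · simp [altSign, h S hS]

lemma IsGrade.ginner_eq_zero {l m : ℕ} {u v : GF n} (hu : IsGrade l u) (hv : IsGrade m v)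
    (hlm : l ≠ m) : ginner u v = 0 :=
  sum_eq_zero fun S _ => by
    by_cases hS : #S = l
    · rw [hv S (hS ▸ hlm), mul_zero]
    · rw [hu S hS, zero_mul]

lemma ginner_sum_sum_of_isGrade {s : Finset ℕ} {a b : ℕ → GF n}
    (ha : ∀ l ∈ s, IsGrade l (a l)) (hb : ∀ l ∈ s, IsGrade l (b l)) :
    ginner (∑ l ∈ s, a l) (∑ l ∈ s, b l) = ∑ l ∈ s, ginner (a l) (b l) := by
  rw [ginner_eq_dotProduct, sum_dotProduct]
  refine sum_congr rfl fun l hl => ?_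
  rw [dotProduct_sum]
  exact sum_eq_single_of_mem l hl fun m hm hml =>
    (ha l hl).ginner_eq_zero (hb m hm) hml.symm

lemma sum_smul_wedge_add_vee_of_isGrade (v : GF n) {s : Finset ℕ} {a : ℕ → GF n}
    (ha : ∀ l ∈ s, IsGrade l (a l)) :
    ∑ l ∈ s, ((-1 : ℂ) ^ l • wedge v (a l) + vee v (a l))
      = wedge v (altSign (∑ l ∈ s, a l)) + vee v (∑ l ∈ s, a l) := by
  rw [sum_add_distrib, altSign_sum, wedge_sum, vee_sum]
  congr 1
  exact sum_congr rfl fun l hl => by rw [(ha l hl).altSign_eq, ← wedge_smul]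

theorem statement11_general (ξ : Fin n → ℝ) (a : ℕ → GF n)
    (ha : ∀ l ≤ n, IsGrade l (a l)) :
    ginner
        (∑ l ∈ Finset.range (n + 1),
          ((-1 : ℂ) ^ l • wedge (oneG fun j => (ξ j : ℂ)) (a l)
            + vee (oneG fun j => (ξ j : ℂ)) (a l)))
        (gconj (∑ l ∈ Finset.range (n + 1),
          ((-1 : ℂ) ^ l • wedge (oneG fun j => (ξ j : ℂ)) (a l)
            + vee (oneG fun j => (ξ j : ℂ)) (a l))))
      = ((∑ j, ξ j ^ 2 : ℝ) : ℂ)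
          * ∑ l ∈ Finset.range (n + 1), ginner (a l) (gconj (a l)) ∧
    ∀ l : ℕ, 1 ≤ l → l + 1 ≤ n →
      ginner (wedge (oneG fun j => (ξ j : ℂ)) (a (l - 1)))
        (gconj (vee (oneG fun j => (ξ j : ℂ)) (a (l + 1)))) = 0 := by
  have hξ : gconj (oneG fun j => (ξ j : ℂ)) = oneG fun j => (ξ j : ℂ) := by
    simp only [gconj_oneG, Complex.conj_ofReal]
  have ha' : ∀ l ∈ range (n + 1), IsGrade l (a l) := fun l hl => ha l (mem_range_succ_iff.mp hl)
  refine ⟨?_, fun l _ _ => ?_⟩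
  · rw [sum_smul_wedge_add_vee_of_isGrade _ ha', gconj_add, gconj_wedge, gconj_vee,
      gconj_altSign, hξ, ginner_wedge_altSign_add_vee, gconj_sum,
      ginner_sum_sum_of_isGrade ha' fun l hl => (ha' l hl).gconj]
    push_cast
    rfl
  · rw [gconj_vee, hξ, ginner_wedge_oneG_vee_oneG]

/-- the symbol identity behind (A.5).  For `ξ ∈ ℝⁿ` regarded as a
real 1-form and `a^l ∈ Λ^l` (`l = 0,…,n`):
`|Σ_l ((−1)^l ξ∧a^l + ξ∨a^l)|² = |ξ|² Σ_l |a^l|²`, and for each `l` the cross terms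
vanish: `⟨ξ∧a^{l−1}, conj(ξ∨a^{l+1})⟩ = 0`. -/
theorem statement11 (hn : 2 ≤ n) (ξ : Fin n → ℝ) (a : ℕ → GF n)
    (ha : ∀ l ≤ n, IsGrade l (a l)) :
    ginner
        (∑ l ∈ Finset.range (n + 1),
          ((-1 : ℂ) ^ l • wedge (oneG fun j => (ξ j : ℂ)) (a l)
            + vee (oneG fun j => (ξ j : ℂ)) (a l)))
        (gconj (∑ l ∈ Finset.range (n + 1),
          ((-1 : ℂ) ^ l • wedge (oneG fun j => (ξ j : ℂ)) (a l)
            + vee (oneG fun j => (ξ j : ℂ)) (a l))))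
      = ((∑ j, ξ j ^ 2 : ℝ) : ℂ)
          * ∑ l ∈ Finset.range (n + 1), ginner (a l) (gconj (a l)) ∧
    ∀ l : ℕ, 1 ≤ l → l + 1 ≤ n →
      ginner (wedge (oneG fun j => (ξ j : ℂ)) (a (l - 1)))
        (gconj (vee (oneG fun j => (ξ j : ℂ)) (a (l + 1)))) = 0 :=
  statement11_general ξ a ha

end EMPaper
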